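/- arXiv:2005.12960 — 5 statements merged into one kernel-verified Lean document; each statement's English description precedes it below -/
import Mathlib

section
/- Let B be an invertible bounded linear operator on a complex Hilbert space H. Then inf_{λ ∈ ℂ} ‖I − λB‖ = inf_{λ ∈ ℂ} ‖I − λB⁻¹‖, where I is the identity operator and the norm is the operator norm. -/
/-!
If `r = ‖1 - T‖ ≤ 1` and `y = T x`, squaring `‖x - y‖ ≤ r ‖x‖` bounds `2 re ⟪y, x⟫` from below
by `(1 - r²) ‖x‖² + ‖y‖²`, and expanding `‖y - (1 - r²) x‖²` with this bound gives at most
`r² ‖y‖²`. Hence `‖1 - (1 - r²) T⁻¹‖ ≤ r`; applied to `T = λ B` this shows that the infimum for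
`B⁻¹` is at most the one for `B`, and exchanging `B` and `B⁻¹` gives the reverse inequality.
-/

open scoped InnerProductSpace

section

variable {𝕜 E : Type*} [RCLike 𝕜] [NormedAddCommGroup E] [InnerProductSpace 𝕜 E]

lemma norm_sub_ofReal_smul_le_of_norm_sub_le {r : ℝ} (hr₀ : 0 ≤ r) (hr₁ : r ≤ 1) {a b : E}
    (h : ‖b - a‖ ≤ r * ‖b‖) : ‖a - ((1 - r ^ 2 : ℝ) : 𝕜) • b‖ ≤ r * ‖a‖ := by
  set s := 1 - r ^ 2
  have hs₀ : 0 ≤ s := by nlinarith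
  have h_re : s * ‖b‖ ^ 2 + ‖a‖ ^ 2 ≤ 2 * RCLike.re ⟪a, b⟫_𝕜 := by
    have := pow_le_pow_left₀ (norm_nonneg _) h 2
    rw [norm_sub_sq (𝕜 := 𝕜), ← inner_conj_symm, RCLike.conj_re] at this
    linarith
  have h_sq : ‖a - (s : 𝕜) • b‖ ^ 2 =
      ‖a‖ ^ 2 - s * (2 * RCLike.re ⟪a, b⟫_𝕜) + s ^ 2 * ‖b‖ ^ 2 := by
    rw [norm_sub_sq (𝕜 := 𝕜), inner_smul_right, RCLike.re_ofReal_mul, norm_smul,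
      RCLike.norm_ofReal, abs_of_nonneg hs₀]
    ring
  refine le_of_pow_le_pow_left₀ two_ne_zero (by positivity) ?_
  rw [h_sq]
  nlinarith [mul_le_mul_of_nonneg_left h_re hs₀]

lemma norm_one_sub_smul_le_of_mul_eq_one {T S : E →L[𝕜] E} (hTS : T * S = 1)
    (hT : ‖1 - T‖ ≤ 1) : ‖1 - ((1 - ‖1 - T‖ ^ 2 : ℝ) : 𝕜) • S‖ ≤ ‖1 - T‖ := by
  refine ContinuousLinearMap.opNorm_le_bound _ (norm_nonneg _) fun y => ?_
  have hy : T (S y) = y := by simpa using congr($hTS y)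
  have h : ‖S y - T (S y)‖ ≤ ‖1 - T‖ * ‖S y‖ := by simpa using (1 - T).le_opNorm (S y)
  rw [hy] at h
  simpa using norm_sub_ofReal_smul_le_of_norm_sub_le (𝕜 := 𝕜) (norm_nonneg _) hT h

lemma iInf_norm_one_sub_smul_symm_le (B : E ≃L[𝕜] E) (lam : 𝕜) :
    ⨅ μ : 𝕜, ‖1 - μ • (B.symm : E →L[𝕜] E)‖ ≤ ‖1 - lam • (B : E →L[𝕜] E)‖ := by
  have hbdd : BddBelow (Set.range fun μ : 𝕜 => ‖1 - μ • (B.symm : E →L[𝕜] E)‖) :=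
    ⟨0, Set.forall_mem_range.2 fun _ => norm_nonneg _⟩
  rcases eq_or_ne lam 0 with rfl | hlam
  · exact ciInf_le_of_le hbdd 0 (by simp)
  set T := lam • (B : E →L[𝕜] E)
  rcases le_or_gt ‖1 - T‖ 1 with hle | hgt
  · have hTS : T * (lam⁻¹ • (B.symm : E →L[𝕜] E)) = 1 := by
      ext x
      simp [T, smul_smul, hlam]
    refine ciInf_le_of_le hbdd (((1 - ‖1 - T‖ ^ 2 : ℝ) : 𝕜) * lam⁻¹) ?_
    simpa [smul_smul] using norm_one_sub_smul_le_of_mul_eq_one hTS hle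
  · refine ciInf_le_of_le hbdd 0 ?_
    simpa [ContinuousLinearMap.one_def] using ContinuousLinearMap.norm_id_le.trans hgt.le

end

theorem iInf_norm_one_sub_smul_eq_inv_general
    {H : Type*} [NormedAddCommGroup H] [InnerProductSpace ℂ H]
    (B : H ≃L[ℂ] H) :
    (⨅ lam : ℂ, ‖(1 : H →L[ℂ] H) - lam • (B : H →L[ℂ] H)‖) =
      ⨅ lam : ℂ, ‖(1 : H →L[ℂ] H) - lam • (B.symm : H →L[ℂ] H)‖ :=
  le_antisymm (le_ciInf fun lam => by simpa using iInf_norm_one_sub_smul_symm_le B.symm lam)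
    (le_ciInf (iInf_norm_one_sub_smul_symm_le B))

/-- Proposition 3.1, second equality in (3.1):
`inf_{λ ∈ ℂ} ‖I - λB‖ = inf_{λ ∈ ℂ} ‖I - λB⁻¹‖` for an invertible bounded
operator `B` on a complex Hilbert space. -/
theorem iInf_norm_one_sub_smul_eq_inv
    {H : Type*} [NormedAddCommGroup H] [InnerProductSpace ℂ H] [CompleteSpace H]
    (B : H ≃L[ℂ] H) :
    (⨅ lam : ℂ, ‖(1 : H →L[ℂ] H) - lam • (B : H →L[ℂ] H)‖) =
      ⨅ lam : ℂ, ‖(1 : H →L[ℂ] H) - lam • (B.symm : H →L[ℂ] H)‖ :=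
  iInf_norm_one_sub_smul_eq_inv_general B
end

section
/- Let H be a nonzero complex Hilbert space and let B be an invertible bounded linear operator on H. Then the linear reduction factor satisfies M_B ≤ √(1 − ν_B·ν_{B⁻¹}). -/
noncomputable def gmresRes {H : Type*} [NormedAddCommGroup H] [NormedSpace ℂ H]
    (T : H →L[ℂ] H) (r0 : H) (k : ℕ) : ℝ :=
  sInf {x : ℝ | ∃ p : Polynomial ℂ,
    p.natDegree ≤ k ∧ p.eval 0 = 1 ∧ x = ‖(Polynomial.aeval T p) r0‖}

/-- The linear reduction factor `M_B`: the infimum of the constants `M ≥ 0`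
such that every GMRES residual sequence for `B` satisfies
`‖r_k‖ ≤ M * ‖r_{k-1}‖`. -/
noncomputable def linRed {H : Type*} [NormedAddCommGroup H] [NormedSpace ℂ H]
    (B : H →L[ℂ] H) : ℝ :=
  sInf {M : ℝ | 0 ≤ M ∧ ∀ (z : H) (k : ℕ), gmresRes B z (k + 1) ≤ M * gmresRes B z k}

/-- The numerical range (field of values) of a bounded operator `T`:
`W(T) = { ⟨Tz, z⟩ : ‖z‖ = 1 }`, where the inner product `⟨·,·⟩` is linear in
its first argument (so `⟨Tz, z⟩` is `inner z (T z)` in Mathlib's convention). -/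
def numRange {H : Type*} [NormedAddCommGroup H] [InnerProductSpace ℂ H]
    (T : H →L[ℂ] H) : Set ℂ :=
  {c | ∃ z : H, ‖z‖ = 1 ∧ c = (inner ℂ z (T z) : ℂ)}

/-- `ν_T = inf { |λ| : λ ∈ W(T) }`. -/
noncomputable def nu {H : Type*} [NormedAddCommGroup H] [InnerProductSpace ℂ H]
    (T : H →L[ℂ] H) : ℝ :=
  sInf {x : ℝ | ∃ c ∈ numRange T, x = ‖c‖}

/-!
Any degree-`k` residual `w = p(B) z` can be improved in degree `k + 1` by `(1 - α X) p`, i.e. by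
one minimal-residual step `w ↦ w - α B w`. Taking for `α B w` the orthogonal projection of `w` onto
the line through `B w` leaves `‖w‖² - |⟪B w, w⟫|² / ‖B w‖²`, and the numerical ranges of `B` and
`B⁻¹` bound `|⟪B w, w⟫|` below by both `ν_B ‖w‖²` and `ν_{B⁻¹} ‖B w‖²`, so the product of these
bounds gives `|⟪B w, w⟫|² / ‖B w‖² ≥ ν_B ν_{B⁻¹} ‖w‖²`.
-/

section Gmres

variable {E : Type*} [NormedAddCommGroup E] [NormedSpace ℂ E]

theorem gmresRes_le_norm_aeval (T : E →L[ℂ] E) (z : E) {k : ℕ} {p : Polynomial ℂ}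
    (hp : p.natDegree ≤ k) (hp0 : p.eval 0 = 1) :
    gmresRes T z k ≤ ‖Polynomial.aeval T p z‖ :=
  csInf_le ⟨0, by rintro x ⟨q, -, -, rfl⟩; positivity⟩ ⟨p, hp, hp0, rfl⟩

theorem gmresRes_succ_le_mul_of_forall_exists (T : E →L[ℂ] E) {M : ℝ} (hM : 0 ≤ M)
    (h : ∀ w, ∃ α : ℂ, ‖w - α • T w‖ ≤ M * ‖w‖) (z : E) (k : ℕ) :
    gmresRes T z (k + 1) ≤ M * gmresRes T z k := by
  conv_rhs => rw [gmresRes, ← smul_eq_mul, ← Real.sInf_smul_of_nonneg hM]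
  refine le_csInf (Set.Nonempty.smul_set ⟨‖z‖, 1, by simp⟩) ?_
  rintro _ ⟨_, ⟨p, hp, hp0, rfl⟩, rfl⟩
  obtain ⟨α, hα⟩ := h (Polynomial.aeval T p z)
  have hdeg : ((1 - Polynomial.C α * Polynomial.X) * p).natDegree ≤ k + 1 :=
    Polynomial.natDegree_mul_le.trans (by rw [add_comm]; gcongr; compute_degree!)
  calc gmresRes T z (k + 1)
      ≤ ‖Polynomial.aeval T ((1 - Polynomial.C α * Polynomial.X) * p) z‖ :=
        gmresRes_le_norm_aeval T z hdeg (by simp [hp0])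
    _ = ‖Polynomial.aeval T p z - α • T (Polynomial.aeval T p z)‖ := by
        simp [sub_mul]
    _ ≤ M • ‖Polynomial.aeval T p z‖ := hα

theorem linRed_le_of_forall_exists (T : E →L[ℂ] E) {M : ℝ} (hM : 0 ≤ M)
    (h : ∀ w, ∃ α : ℂ, ‖w - α • T w‖ ≤ M * ‖w‖) : linRed T ≤ M :=
  csInf_le ⟨0, fun _ hM' => hM'.1⟩ ⟨hM, gmresRes_succ_le_mul_of_forall_exists T hM h⟩

end Gmres

section NumericalRange

variable {H : Type*} [NormedAddCommGroup H] [InnerProductSpace ℂ H]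

theorem nu_nonneg (T : H →L[ℂ] H) : 0 ≤ nu T :=
  Real.sInf_nonneg (by rintro x ⟨c, -, rfl⟩; positivity)

theorem nu_mul_norm_sq_le (T : H →L[ℂ] H) (w : H) :
    nu T * ‖w‖ ^ 2 ≤ ‖(inner ℂ w (T w) : ℂ)‖ := by
  rcases eq_or_ne w 0 with rfl | hw
  · simp
  set r : ℝ := ‖w‖⁻¹
  have hr : 0 < r := inv_pos.2 (norm_pos_iff.2 hw)
  have hunit : ‖(r : ℂ) • w‖ = 1 := by
    rw [norm_smul, Complex.norm_real, Real.norm_of_nonneg hr.le,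
      inv_mul_cancel₀ (norm_ne_zero_iff.2 hw)]
  have hle : nu T ≤ ‖(inner ℂ ((r : ℂ) • w) (T ((r : ℂ) • w)) : ℂ)‖ :=
    csInf_le ⟨0, by rintro x ⟨c, -, rfl⟩; positivity⟩ ⟨_, ⟨_, hunit, rfl⟩, rfl⟩
  rw [map_smul, inner_smul_left, inner_smul_right, Complex.conj_ofReal, norm_mul, norm_mul,
    Complex.norm_real, Real.norm_of_nonneg hr.le] at hle
  have hw2 : r * r * ‖w‖ ^ 2 = 1 := by simp only [r]; field_simp
  calc nu T * ‖w‖ ^ 2 ≤ (r * (r * ‖(inner ℂ w (T w) : ℂ)‖)) * ‖w‖ ^ 2 := by gcongr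
    _ = ‖(inner ℂ w (T w) : ℂ)‖ := by linear_combination ‖(inner ℂ w (T w) : ℂ)‖ * hw2

theorem norm_sub_smul_sq (u w : H) :
    ‖w - ((inner ℂ u w : ℂ) / (‖u‖ ^ 2 : ℝ)) • u‖ ^ 2
      = ‖w‖ ^ 2 - ‖(inner ℂ u w : ℂ)‖ ^ 2 / ‖u‖ ^ 2 := by
  rcases eq_or_ne u 0 with rfl | hu
  · simp
  have hu2 : ‖u‖ ^ 2 ≠ 0 := pow_ne_zero 2 (norm_ne_zero_iff.2 hu)
  rw [@norm_sub_sq ℂ, inner_smul_right, ← inner_conj_symm w u, div_mul_eq_mul_div,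
    Complex.mul_conj, Complex.normSq_eq_norm_sq, norm_smul, norm_div, Complex.norm_real,
    Real.norm_of_nonneg (by positivity)]
  simp only [RCLike.re_to_complex, ← Complex.ofReal_div, Complex.ofReal_re]
  field_simp
  ring

theorem exists_norm_sub_smul_apply_le (B : H ≃L[ℂ] H) (w : H) :
    ∃ α : ℂ, ‖w - α • B w‖ ≤ √(1 - nu (B : H →L[ℂ] H) * nu (B.symm : H →L[ℂ] H)) * ‖w‖ := by
  set u := B w
  set c : ℂ := inner ℂ u w
  have hB : nu (B : H →L[ℂ] H) * ‖w‖ ^ 2 ≤ ‖c‖ :=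
    (nu_mul_norm_sq_le _ w).trans_eq (norm_inner_symm _ _)
  have hBinv : nu (B.symm : H →L[ℂ] H) * ‖u‖ ^ 2 ≤ ‖c‖ := by
    simpa [u] using nu_mul_norm_sq_le (B.symm : H →L[ℂ] H) u
  have hνB := nu_nonneg (B : H →L[ℂ] H)
  have hνBinv := nu_nonneg (B.symm : H →L[ℂ] H)
  have hproj : nu (B : H →L[ℂ] H) * nu (B.symm : H →L[ℂ] H) * ‖w‖ ^ 2 ≤ ‖c‖ ^ 2 / ‖u‖ ^ 2 := by
    rcases eq_or_ne u 0 with hu | hu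
    · have hc : ‖c‖ = 0 := by simp [c, hu]
      rw [hc] at hB
      rw [hu, norm_zero, zero_pow two_ne_zero, div_zero]
      nlinarith
    · rw [le_div_iff₀ (by positivity)]
      nlinarith [mul_le_mul hB hBinv (by positivity) (norm_nonneg c)]
  refine ⟨c / (‖u‖ ^ 2 : ℝ), ?_⟩
  rw [← Real.sqrt_sq (norm_nonneg w), ← Real.sqrt_mul' _ (by positivity)]
  refine (le_abs_self _).trans (Real.abs_le_sqrt ?_)
  rw [norm_sub_smul_sq]
  linarith

end NumericalRange

theorem linRed_le_sqrt_one_sub_nu_mul_nu_inv_general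
    {H : Type*} [NormedAddCommGroup H] [InnerProductSpace ℂ H]
    (B : H ≃L[ℂ] H) :
    linRed (B : H →L[ℂ] H) ≤
      Real.sqrt (1 - nu (B : H →L[ℂ] H) * nu (B.symm : H →L[ℂ] H)) :=
  linRed_le_of_forall_exists _ (Real.sqrt_nonneg _) (exists_norm_sub_smul_apply_le B)

/-- Proposition 3.1, bound (3.1) (Starke / Eiermann–Ernst):
`M_B ≤ sqrt(1 - ν_B ν_{B⁻¹})`. -/
theorem linRed_le_sqrt_one_sub_nu_mul_nu_inv
    {H : Type*} [NormedAddCommGroup H] [InnerProductSpace ℂ H] [CompleteSpace H]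
    [Nontrivial H] (B : H ≃L[ℂ] H) :
    linRed (B : H →L[ℂ] H) ≤
      Real.sqrt (1 - nu (B : H →L[ℂ] H) * nu (B.symm : H →L[ℂ] H)) :=
  linRed_le_sqrt_one_sub_nu_mul_nu_inv_general B
end

section
/- Let B be an invertible bounded linear operator on a complex Hilbert space H. Then B exhibits strictly monotone GMRES convergence (for every r0 ∈ H and every k ≥ 1, either ‖r_k^{B,r0}‖ < ‖r_{k-1}^{B,r0}‖ or ‖r_{k-1}^{B,r0}‖ = 0) if and only if 0 ∉ W(B). -/
/-!
The GMRES minimum is attained, because the admissible residuals form `r0` minus a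
finite-dimensional subspace. If `0 ∉ W(T)`, the optimal residual `r ≠ 0` satisfies
`⟨Tr, r⟩ ≠ 0`, so subtracting from `r` its orthogonal projection onto `ℂ Tr` (one more GMRES
step) makes it strictly shorter. Conversely, if `⟨z, Tz⟩ = 0` with `z ≠ 0`, then `z ⊥ aTz` and
Pythagoras gives `‖z + aTz‖ ≥ ‖z‖`: started at `r0 = z`, GMRES stagnates in its first step.
-/

open Polynomial Filter

theorem Submodule.exists_forall_norm_sub_le {𝕜 E : Type*} [NontriviallyNormedField 𝕜]
    [LocallyCompactSpace 𝕜] [NormedAddCommGroup E] [NormedSpace 𝕜 E] (K : Submodule 𝕜 E)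
    [FiniteDimensional 𝕜 K] (x : E) : ∃ v ∈ K, ∀ w ∈ K, ‖x - v‖ ≤ ‖x - w‖ := by
  have := FiniteDimensional.proper 𝕜 K
  have hcoercive (v : K) : ‖v‖ + -‖x‖ ≤ ‖x - v‖ := by
    simpa [norm_sub_rev x] using norm_sub_norm_le (v : E) x
  have hlim : Tendsto (fun v : K => ‖x - v‖) (cocompact K) atTop :=
    tendsto_atTop_mono hcoercive
      (tendsto_atTop_add_const_right _ (-‖x‖) tendsto_norm_cocompact_atTop)
  obtain ⟨v, hv⟩ := (by fun_prop : Continuous fun v : K => ‖x - v‖).exists_forall_le hlim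
  exact ⟨v, v.2, fun w hw => hv ⟨w, hw⟩⟩

theorem Polynomial.one_sub_mem_degreeLE_inf_ker_lcoeff_zero_iff {R : Type*} [CommRing R]
    {k : ℕ} {p : R[X]} :
    1 - p ∈ degreeLE R k ⊓ LinearMap.ker (lcoeff R 0) ↔ p.natDegree ≤ k ∧ p.eval 0 = 1 := by
  have hdeg : ∀ q : R[X], q.natDegree ≤ k → (1 - q).natDegree ≤ k := fun q hq =>
    (natDegree_sub_le _ _).trans (by simpa using hq)
  simp only [Submodule.mem_inf, mem_degreeLE, ← natDegree_le_iff_degree_le, LinearMap.mem_ker,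
    lcoeff_apply, coeff_zero_eq_eval_zero, eval_sub, eval_one, sub_eq_zero, eq_comm (a := (1 : R))]
  exact and_congr_left' ⟨fun h => by simpa using hdeg _ h, hdeg p⟩

section Pythagoras

variable {𝕜 E : Type*} [RCLike 𝕜] [NormedAddCommGroup E] [InnerProductSpace 𝕜 E]

theorem norm_le_norm_add_of_inner_eq_zero {x y : E} (h : inner 𝕜 x y = 0) : ‖x‖ ≤ ‖x + y‖ := by
  refine (mul_self_le_mul_self_iff (norm_nonneg _) (norm_nonneg _)).2 ?_
  rw [norm_add_sq_eq_norm_sq_add_norm_sq_of_inner_eq_zero x y h]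
  exact le_add_of_nonneg_right (mul_self_nonneg _)

theorem exists_norm_sub_smul_lt_of_inner_ne_zero {x y : E} (h : inner 𝕜 y x ≠ 0) :
    ∃ α : 𝕜, ‖x - α • y‖ < ‖x‖ := by
  have hy : y ≠ 0 := by rintro rfl; simp at h
  set α := inner 𝕜 y x / inner 𝕜 y y
  have hα : α ≠ 0 := div_ne_zero h (inner_self_ne_zero.2 hy)
  have horth : inner 𝕜 (α • y) (x - α • y) = 0 := by
    rw [inner_smul_left, inner_sub_right, inner_smul_right,
      div_mul_cancel₀ _ (inner_self_ne_zero.2 hy), sub_self, mul_zero]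
  have hpyth := norm_add_sq_eq_norm_sq_add_norm_sq_of_inner_eq_zero _ _ horth
  rw [add_sub_cancel] at hpyth
  have hpos : 0 < ‖α • y‖ := norm_pos_iff.2 (smul_ne_zero hα hy)
  exact ⟨α, lt_of_mul_self_lt_mul_self₀ (norm_nonneg _) (by linarith [mul_pos hpos hpos])⟩

end Pythagoras

section GMRES

variable {H : Type*} [NormedAddCommGroup H] [NormedSpace ℂ H] (T : H →L[ℂ] H) (r0 : H) {k : ℕ}

theorem gmresRes_le {p : ℂ[X]} (hdeg : p.natDegree ≤ k) (h0 : p.eval 0 = 1) :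
    gmresRes T r0 k ≤ ‖aeval T p r0‖ :=
  csInf_le ⟨0, by rintro _ ⟨q, -, -, rfl⟩; exact norm_nonneg _⟩ ⟨p, hdeg, h0, rfl⟩

theorem le_gmresRes {c : ℝ}
    (h : ∀ p : ℂ[X], p.natDegree ≤ k → p.eval 0 = 1 → c ≤ ‖aeval T p r0‖) :
    c ≤ gmresRes T r0 k :=
  le_csInf ⟨‖r0‖, 1, by simp, by simp, by simp⟩ (by rintro _ ⟨p, hdeg, h0, rfl⟩; exact h p hdeg h0)

theorem gmresRes_zero : gmresRes T r0 0 = ‖r0‖ := by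
  refine le_antisymm (by simpa using gmresRes_le T r0 (p := 1) le_rfl eval_one)
    (le_gmresRes T r0 fun p hdeg h0 => ?_)
  rw [eq_C_of_natDegree_le_zero hdeg, coeff_zero_eq_eval_zero, h0]
  simp

theorem exists_gmresRes_eq (k : ℕ) :
    ∃ p : ℂ[X], p.natDegree ≤ k ∧ p.eval 0 = 1 ∧ ‖aeval T p r0‖ = gmresRes T r0 k := by
  let Φ : ℂ[X] →ₗ[ℂ] H := (ContinuousLinearMap.apply ℂ H r0).toLinearMap ∘ₗ (aeval T).toLinearMap
  -- `p` is admissible iff `1 - p ∈ D`, so the admissible residuals are `r0 - Φ D`.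
  let D := degreeLE ℂ k ⊓ LinearMap.ker (lcoeff ℂ 0)
  have : FiniteDimensional ℂ (degreeLE ℂ k) :=
    degreeLT_succ_eq_degreeLE (R := ℂ) (n := k) ▸ .of_basis (degreeLT.basis ℂ (k + 1))
  obtain ⟨_, ⟨q, hq, rfl⟩, hmin⟩ := (D.map Φ).exists_forall_norm_sub_le r0
  obtain ⟨hdeg, h0⟩ :=
    one_sub_mem_degreeLE_inf_ker_lcoeff_zero_iff.1 ((sub_sub_cancel 1 q).symm ▸ hq)
  refine ⟨1 - q, hdeg, h0, le_antisymm (le_gmresRes T r0 fun p hp hp0 => ?_)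
    (gmresRes_le T r0 hdeg h0)⟩
  rw [show aeval T (1 - q) r0 = r0 - Φ q by simp [Φ]]
  simpa [Φ] using hmin _ (Submodule.mem_map_of_mem
    (one_sub_mem_degreeLE_inf_ker_lcoeff_zero_iff.2 ⟨hp, hp0⟩))

theorem gmresRes_succ_le_norm_sub_smul {p : ℂ[X]} (hdeg : p.natDegree ≤ k) (h0 : p.eval 0 = 1)
    (α : ℂ) : gmresRes T r0 (k + 1) ≤ ‖aeval T p r0 - α • T (aeval T p r0)‖ := by
  have hdeg' : ((1 - C α * X) * p).natDegree ≤ k + 1 := by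
    refine natDegree_mul_le.trans (add_comm k 1 ▸ add_le_add ?_ hdeg)
    exact (natDegree_sub_le _ _).trans
      (max_le (by simp) ((natDegree_C_mul_le _ _).trans natDegree_X_le))
  simpa [sub_mul, h0, Algebra.algebraMap_eq_smul_one, smul_mul_assoc] using
    gmresRes_le T r0 hdeg' (by simp [h0])

end GMRES

section NumericalRange

variable {H : Type*} [NormedAddCommGroup H] [InnerProductSpace ℂ H] (T : H →L[ℂ] H)

theorem zero_mem_numRange_iff : 0 ∈ numRange T ↔ ∃ z ≠ 0, inner ℂ z (T z) = 0 := by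
  refine ⟨fun ⟨z, hz, h⟩ => ⟨z, norm_ne_zero_iff.1 (hz ▸ one_ne_zero), h.symm⟩, ?_⟩
  rintro ⟨z, hz, h⟩
  refine ⟨(‖z‖⁻¹ : ℂ) • z, ?_, ?_⟩
  · simp [norm_smul, hz]
  · simp [h]

theorem norm_le_gmresRes_one_of_inner_eq_zero {z : H} (h : inner ℂ z (T z) = 0) :
    ‖z‖ ≤ gmresRes T z 1 :=
  le_gmresRes T z fun p hdeg h0 => by
    have horth : inner ℂ z (p.coeff 1 • T z) = 0 := by rw [inner_smul_right, h, mul_zero]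
    rw [eq_X_add_C_of_natDegree_le_one hdeg, coeff_zero_eq_eval_zero, h0]
    simpa [Algebra.algebraMap_eq_smul_one, smul_mul_assoc, add_comm] using
      norm_le_norm_add_of_inner_eq_zero horth

theorem gmresRes_succ_lt (hW : 0 ∉ numRange T) (r0 : H) {k : ℕ} (h : gmresRes T r0 k ≠ 0) :
    gmresRes T r0 (k + 1) < gmresRes T r0 k := by
  obtain ⟨p, hdeg, h0, hp⟩ := exists_gmresRes_eq T r0 k
  have hr : aeval T p r0 ≠ 0 := fun hr => h (by rw [← hp, hr, norm_zero])
  have hinner : inner ℂ (T (aeval T p r0)) (aeval T p r0) ≠ 0 := fun h' =>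
    hW ((zero_mem_numRange_iff T).2 ⟨_, hr, inner_eq_zero_symm.1 h'⟩)
  obtain ⟨α, hα⟩ := exists_norm_sub_smul_lt_of_inner_ne_zero hinner
  exact hp ▸ (gmresRes_succ_le_norm_sub_smul T r0 hdeg h0 α).trans_lt hα

end NumericalRange

theorem strictly_monotone_gmres_iff_zero_not_mem_numRange_general
    {H : Type*} [NormedAddCommGroup H] [InnerProductSpace ℂ H]
    (B : H ≃L[ℂ] H) :
    (∀ (r0 : H) (k : ℕ),
        gmresRes (B : H →L[ℂ] H) r0 (k + 1) < gmresRes (B : H →L[ℂ] H) r0 k ∨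
        gmresRes (B : H →L[ℂ] H) r0 k = 0) ↔
      (0 : ℂ) ∉ numRange (B : H →L[ℂ] H) := by
  refine ⟨fun hM h0 => ?_, fun hW r0 k => or_iff_not_imp_right.2 (gmresRes_succ_lt _ hW r0)⟩
  obtain ⟨z, hz, hBz⟩ := (zero_mem_numRange_iff _).1 h0
  have hle := norm_le_gmresRes_one_of_inner_eq_zero _ hBz
  rcases hM z 0 with hlt | hzero
  · exact (hlt.trans_eq (gmresRes_zero _ z)).not_ge hle
  · exact hz (norm_eq_zero.1 (gmresRes_zero _ z ▸ hzero))

/-- Proposition 3.1, equivalence (M1) ⇔ (M2): `B` exhibits strictly monotone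
GMRES convergence iff `0 ∉ W(B)`. -/
theorem strictly_monotone_gmres_iff_zero_not_mem_numRange
    {H : Type*} [NormedAddCommGroup H] [InnerProductSpace ℂ H] [CompleteSpace H]
    (B : H ≃L[ℂ] H) :
    (∀ (r0 : H) (k : ℕ),
        gmresRes (B : H →L[ℂ] H) r0 (k + 1) < gmresRes (B : H →L[ℂ] H) r0 k ∨
        gmresRes (B : H →L[ℂ] H) r0 k = 0) ↔
      (0 : ℂ) ∉ numRange (B : H →L[ℂ] H) :=
  strictly_monotone_gmres_iff_zero_not_mem_numRange_general B
end

section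
/- Let H = ℓ²(ℤ, ℂ) and let B be the diagonal operator defined by (Bx)_j = e^{i·arctan(j)}·x_j for j ∈ ℤ. Then B is a unitary operator on H, 0 ∉ W(B) (i.e., ⟨Bz, z⟩ ≠ 0 for every z ∈ H with z ≠ 0), and yet ν_B = 0 (i.e., inf { |⟨Bz, z⟩| : ‖z‖ = 1 } = 0). -/
/-!
`B` is multiplication by the unimodular sequence `e^{i arctan j}`, so `B*` is multiplication by
its conjugate and `B` is unitary. Since `Re e^{i arctan j} = cos (arctan j) > 0`, the real part
`Re ⟨z, Bz⟩ = ∑ cos (arctan j) |z_j|²` is positive for `z ≠ 0`. But these weights are not bounded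
below: the phases at `j` and `-j` are conjugate, so the unit vector `(e_j + e_{-j}) / √2` gives
`⟨z, Bz⟩ = cos (arctan j)`, which tends to `0`.
-/

open scoped ENNReal ComplexConjugate InnerProductSpace

namespace lp

variable {ι 𝕜 : Type*} [RCLike 𝕜] {p : ℝ≥0∞}

theorem norm_mul_apply_le (d : lp (fun _ : ι => 𝕜) ∞) (x : ι → 𝕜) (i : ι) :
    ‖(⇑d * x) i‖ ≤ ‖((‖d‖ : 𝕜) • x) i‖ := by
  rw [Pi.mul_apply, Pi.smul_apply, norm_mul, norm_smul, RCLike.norm_ofReal, abs_norm]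
  gcongr
  exact norm_apply_le_norm ENNReal.top_ne_zero d i

theorem memℓp_mul {d : lp (fun _ : ι => 𝕜) ∞} {x : ι → 𝕜} (hx : Memℓp x p) :
    Memℓp (⇑d * x) p :=
  (hx.const_smul _).mono' (norm_mul_apply_le d x)

variable [Fact (1 ≤ p)]

noncomputable def diagonal (d : lp (fun _ : ι => 𝕜) ∞) :
    lp (fun _ : ι => 𝕜) p →L[𝕜] lp (fun _ : ι => 𝕜) p :=
  LinearMap.mkContinuous
    { toFun := fun x => ⟨⇑d * ⇑x, memℓp_mul (lp.memℓp x)⟩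
      map_add' := fun x y => ext <| funext fun i => mul_add _ _ _
      map_smul' := fun c x => ext <| funext fun i => mul_left_comm _ c _ }
    ‖d‖ fun x => by
      have hp : p ≠ 0 := (zero_lt_one.trans_le Fact.out).ne'
      calc ‖(⟨⇑d * ⇑x, memℓp_mul (lp.memℓp x)⟩ : lp (fun _ : ι => 𝕜) p)‖
          ≤ ‖(‖d‖ : 𝕜) • x‖ := norm_mono hp (norm_mul_apply_le d x)
        _ = ‖d‖ * ‖x‖ := by rw [norm_const_smul hp, RCLike.norm_ofReal, abs_norm]

@[simp]
theorem diagonal_apply (d : lp (fun _ : ι => 𝕜) ∞) (x : lp (fun _ : ι => 𝕜) p) (i : ι) :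
    diagonal d x i = d i * x i :=
  rfl

@[simp]
theorem diagonal_one : diagonal (p := p) (1 : lp (fun _ : ι => 𝕜) ∞) = 1 := by
  ext x i
  simp

theorem diagonal_mul (d e : lp (fun _ : ι => 𝕜) ∞) :
    diagonal (p := p) (d * e) = diagonal d * diagonal e := by
  ext x i
  simp [mul_assoc]

theorem star_diagonal (d : lp (fun _ : ι => 𝕜) ∞) :
    star (diagonal (p := 2) d) = diagonal (star d) := by
  rw [ContinuousLinearMap.star_eq_adjoint, eq_comm, ContinuousLinearMap.eq_adjoint_iff]
  intro x y
  simp only [inner_eq_tsum, diagonal_apply, RCLike.inner_apply]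
  congr 1 with i
  rw [coeFn_star, Pi.star_apply, map_mul, RCLike.star_def, RCLike.conj_conj]
  ring

theorem diagonal_mem_unitary {d : lp (fun _ : ι => 𝕜) ∞} (hd : d ∈ unitary _) :
    diagonal d ∈ unitary (lp (fun _ : ι => 𝕜) 2 →L[𝕜] lp (fun _ : ι => 𝕜) 2) := by
  rw [Unitary.mem_iff, star_diagonal, ← diagonal_mul, ← diagonal_mul,
    Unitary.star_mul_self_of_mem hd, Unitary.mul_star_self_of_mem hd, diagonal_one, and_self]

theorem mem_unitary_of_forall_norm_eq_one {d : lp (fun _ : ι => 𝕜) ∞} (hd : ∀ i, ‖d i‖ = 1) :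
    d ∈ unitary (lp (fun _ : ι => 𝕜) ∞) := by
  rw [Unitary.mem_iff_star_mul_self]
  ext i
  simp [RCLike.conj_mul, hd]

theorem re_inner_diagonal_self_pos {d : lp (fun _ : ι => 𝕜) ∞} (hd : ∀ i, 0 < RCLike.re (d i))
    {x : lp (fun _ : ι => 𝕜) 2} (hx : x ≠ 0) : 0 < RCLike.re ⟪x, diagonal d x⟫_𝕜 := by
  obtain ⟨i, hi⟩ : ∃ i, x i ≠ 0 := by
    by_contra! h
    exact hx (ext (funext h))
  have hsum : HasSum (fun i => RCLike.re (d i) * ‖x i‖ ^ 2) (RCLike.re ⟪x, diagonal d x⟫_𝕜) := by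
    convert RCLike.hasSum_re _ (hasSum_inner x (diagonal d x)) using 2 with j
    rw [diagonal_apply, RCLike.inner_apply, mul_assoc, RCLike.mul_conj, ← RCLike.ofReal_pow,
      RCLike.re_mul_ofReal]
  exact hasSum_lt (fun j => mul_nonneg (hd j).le (sq_nonneg ‖x j‖))
    (mul_pos (hd i) (pow_pos (norm_pos_iff.2 hi) 2)) hasSum_zero hsum

theorem exists_norm_eq_one_inner_diagonal_self_eq {i k : ι} (hik : i ≠ k)
    (d : lp (fun _ : ι => 𝕜) ∞) :
    ∃ z : lp (fun _ : ι => 𝕜) 2, ‖z‖ = 1 ∧ ⟪z, diagonal d z⟫_𝕜 = (d i + d k) / 2 := by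
  classical
  set a : 𝕜 := (((√2)⁻¹ : ℝ) : 𝕜)
  set z : lp (fun _ : ι => 𝕜) 2 := lp.single 2 i a + lp.single 2 k a
  -- for `e = 1` this also gives `‖z‖ = 1`
  have key : ∀ e : lp (fun _ : ι => 𝕜) ∞, ⟪z, diagonal e z⟫_𝕜 = (e i + e k) / 2 := by
    intro e
    simp only [z, map_add, inner_add_left, inner_single_left, AddSubgroup.coe_add, PreLp.add_apply,
      diagonal_apply, lp.single_apply, Pi.single_eq_same, Pi.single_eq_of_ne hik,
      Pi.single_eq_of_ne hik.symm, mul_zero, add_zero, zero_add, RCLike.inner_apply]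
    have ha : a * conj a = 2⁻¹ := by
      rw [RCLike.conj_ofReal, ← RCLike.ofReal_mul, ← mul_inv, Real.mul_self_sqrt zero_le_two,
        RCLike.ofReal_inv, RCLike.ofReal_ofNat]
    rw [mul_assoc, mul_assoc, ha]
    ring
  refine ⟨z, ?_, key d⟩
  have hzz : ⟪z, z⟫_𝕜 = 1 := by
    simpa [add_halves] using key 1
  rw [inner_self_eq_norm_sq_to_K] at hzz
  exact (pow_eq_one_iff_of_nonneg (norm_nonneg z) two_ne_zero).1 (mod_cast hzz)

section Phase

open Complex

variable {ι : Type*}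

noncomputable def phaseSequence (θ : ι → ℝ) : lp (fun _ : ι => ℂ) ∞ :=
  ⟨fun i => exp (I * θ i),
    memℓp_infty ⟨1, by rintro _ ⟨i, rfl⟩; exact (norm_exp_I_mul_ofReal _).le⟩⟩

variable (θ : ι → ℝ) (i : ι)

@[simp]
theorem phaseSequence_apply : phaseSequence θ i = exp (I * θ i) :=
  rfl

theorem norm_phaseSequence_apply : ‖phaseSequence θ i‖ = 1 :=
  norm_exp_I_mul_ofReal _

theorem re_phaseSequence_apply : (phaseSequence θ i).re = Real.cos (θ i) := by
  rw [phaseSequence_apply, mul_comm, exp_ofReal_mul_I_re]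

theorem phaseSequence_apply_eq_conj {k : ι} (h : θ k = -θ i) :
    phaseSequence θ k = conj (phaseSequence θ i) := by
  rw [phaseSequence_apply, phaseSequence_apply, ← exp_conj, map_mul, conj_I, conj_ofReal, h,
    ofReal_neg, neg_mul_comm]

end Phase

end lp

open Filter Topology

theorem Real.tendsto_cos_arctan_atTop :
    Tendsto (fun x => Real.cos (Real.arctan x)) atTop (𝓝 0) := by
  rw [← Real.cos_pi_div_two]
  exact (Real.continuous_cos.tendsto _).comp
    (tendsto_nhds_of_tendsto_nhdsWithin Real.tendsto_arctan_atTop)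

/-- Remark 3.1: the diagonal operator `B` on `ℓ²(ℤ, ℂ)` with diagonal entries
`e^{i·arctan j}` is unitary, has `0 ∉ W(B)` (equivalently `⟨Bz, z⟩ ≠ 0` for all
`z ≠ 0`), and yet `ν_B = inf { |⟨Bz, z⟩| : ‖z‖ = 1 } = 0`. -/
theorem unitary_diagonal_arctan_monotone_not_linear
    (B : lp (fun _ : ℤ => ℂ) 2 →L[ℂ] lp (fun _ : ℤ => ℂ) 2)
    (hB : ∀ (x : lp (fun _ : ℤ => ℂ) 2) (j : ℤ),
      (B x : ∀ _ : ℤ, ℂ) j = Complex.exp (Complex.I * (Real.arctan j : ℂ)) * (x : ∀ _ : ℤ, ℂ) j) :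
    B ∈ unitary (lp (fun _ : ℤ => ℂ) 2 →L[ℂ] lp (fun _ : ℤ => ℂ) 2) ∧
    (∀ z : lp (fun _ : ℤ => ℂ) 2, z ≠ 0 → (inner ℂ z (B z) : ℂ) ≠ 0) ∧
    sInf {x : ℝ | ∃ z : lp (fun _ : ℤ => ℂ) 2, ‖z‖ = 1 ∧ x = ‖(inner ℂ z (B z) : ℂ)‖} = 0 := by
  set θ : ℤ → ℝ := fun j => Real.arctan j
  obtain rfl : B = lp.diagonal (lp.phaseSequence θ) :=
    ContinuousLinearMap.ext fun x => lp.ext (funext (hB x))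
  set S := {x : ℝ | ∃ z : lp (fun _ : ℤ => ℂ) 2, ‖z‖ = 1 ∧
    x = ‖(inner ℂ z (lp.diagonal (lp.phaseSequence θ) z) : ℂ)‖}
  have hS_nonneg : ∀ x ∈ S, 0 ≤ x := by
    rintro _ ⟨z, -, rfl⟩
    exact norm_nonneg _
  have hS_cos : ∀ j : ℤ, 0 < j → Real.cos (θ j) ∈ S := by
    intro j hj
    obtain ⟨z, hz, hBz⟩ := lp.exists_norm_eq_one_inner_diagonal_self_eq (by omega : j ≠ -j)
      (lp.phaseSequence θ)
    refine ⟨z, hz, ?_⟩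
    rw [hBz, lp.phaseSequence_apply_eq_conj θ j (k := -j) (by simp [θ, Real.arctan_neg]),
      Complex.add_conj]
    push_cast
    rw [mul_div_cancel_left₀ _ two_ne_zero, Complex.norm_real, lp.re_phaseSequence_apply,
      Real.norm_of_nonneg (Real.cos_arctan_pos _).le]
  have hre : ∀ j, 0 < RCLike.re (lp.phaseSequence θ j) := fun j => by
    rw [RCLike.re_to_complex, lp.re_phaseSequence_apply]
    exact Real.cos_arctan_pos _
  refine ⟨lp.diagonal_mem_unitary (lp.mem_unitary_of_forall_norm_eq_one
    (lp.norm_phaseSequence_apply θ)), fun z hz h => ?_, ?_⟩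
  · exact (lp.re_inner_diagonal_self_pos hre hz).ne' (by simp [h])
  · exact le_antisymm
      (ge_of_tendsto (Real.tendsto_cos_arctan_atTop.comp tendsto_intCast_atTop_atTop)
        ((eventually_gt_atTop 0).mono fun j hj => csInf_le ⟨0, hS_nonneg⟩ (hS_cos j hj)))
      (le_csInf ⟨_, hS_cos 1 one_pos⟩ hS_nonneg)
end

section
/- Let H be a complex separable Hilbert space, A an invertible bounded linear operator on H, r0 ∈ H, and k ≥ 1. Suppose (t_1, …, t_{k+1}) is an orthonormal family in H such that span{t_1, …, t_j} = K_j(A, r0) for each j = 1, …, k+1, and (z_1, …, z_k) is an orthonormal family such that span{z_1, …, z_j} = A·K_j(A, r0) for each j = 1, …, k. Then ‖r_k^{A,r0}‖ = |⟨z_k, t_{k+1}⟩|·‖r_{k-1}^{A,r0}‖, and moreover for every λ ∈ ℂ, ‖r_k^{A,r0}‖ = |⟨(I − λA⁻¹)z_k, t_{k+1}⟩|·‖r_{k-1}^{A,r0}‖ (Moret's formula). -/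
open Polynomial Submodule Module
open scoped InnerProductSpace

theorem Polynomial.natDegree_le_and_eval_zero_eq_one_iff {R : Type*} [CommRing R]
    [Nontrivial R] {p : R[X]} {j : ℕ} :
    p.natDegree ≤ j ∧ p.eval 0 = 1 ↔ ∃ q ∈ degreeLT R j, p = 1 - X * q := by
  constructor
  · rintro ⟨hp, hp0⟩
    refine ⟨-p.divX, ?_, ?_⟩
    · have hne : p ≠ 0 := by rintro rfl; simp at hp0
      rw [mem_degreeLT, degree_neg]
      exact (degree_divX_lt hne).trans_le (degree_le_of_natDegree_le hp)
    · conv_lhs => rw [← X_mul_divX_add p]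
      rw [coeff_zero_eq_eval_zero, hp0]
      simp [add_comm]
  · rintro ⟨q, hq, rfl⟩
    refine ⟨natDegree_le_iff_coeff_eq_zero.2 ?_, by simp⟩
    rintro (_ | m) hm
    · omega
    · have : q.coeff m = 0 := coeff_eq_zero_of_degree_lt
        ((mem_degreeLT.1 hq).trans_le (by exact_mod_cast (by omega : j ≤ m)))
      simp [coeff_one, coeff_X_mul, this]

section FinSpan

variable {R M : Type*} [Semiring R] [AddCommMonoid M] [Module R M] {n : ℕ} {f : Fin n → M}
  {g : ℕ → Submodule R M}

theorem span_image_Iio_eq_of_span_image_Iic_eq (h0 : g 0 = ⊥)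
    (h : ∀ j : Fin n, span R (f '' Set.Iic j) = g (j + 1)) (j : Fin n) :
    span R (f '' Set.Iio j) = g j := by
  obtain ⟨_ | m, hj⟩ := j
  · have : Set.Iio (⟨0, hj⟩ : Fin n) = ∅ := by ext i; simp [Fin.lt_def]
    simp [this, h0]
  · rw [← h ⟨m, by omega⟩]
    congr
    ext i
    simp only [Set.mem_Iio, Set.mem_Iic, Fin.lt_def, Fin.le_def]
    omega

theorem eq_span_singleton_sup_of_span_image_Iic_eq (h0 : g 0 = ⊥)
    (h : ∀ j : Fin n, span R (f '' Set.Iic j) = g (j + 1)) (j : Fin n) :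
    g (j + 1) = R ∙ f j ⊔ g j := by
  rw [← h, ← Set.Iio_insert, Set.image_insert_eq, span_insert,
    span_image_Iio_eq_of_span_image_Iic_eq h0 h]

end FinSpan

section Krylov

variable {𝕜 E : Type*} [NontriviallyNormedField 𝕜] [NormedAddCommGroup E] [NormedSpace 𝕜 E]

def krylov (T : E →L[𝕜] E) (r : E) (j : ℕ) : Submodule 𝕜 E :=
  span 𝕜 ((fun i => (T ^ i) r) '' Set.Iio j)

variable (T : E →L[𝕜] E) (r : E)

instance (j : ℕ) : FiniteDimensional 𝕜 (krylov T r j) :=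
  FiniteDimensional.span_of_finite 𝕜 ((Set.finite_Iio j).image _)

@[simp]
theorem krylov_zero : krylov T r 0 = ⊥ := by
  simp [krylov]

theorem krylov_add_one (j : ℕ) :
    krylov T r (j + 1) = span 𝕜 ((fun i => (T ^ i) r) '' Set.Iic j) := by
  rw [krylov, Set.Iio_add_one_eq_Iic]

theorem krylov_succ (j : ℕ) : krylov T r (j + 1) = 𝕜 ∙ (T ^ j) r ⊔ krylov T r j := by
  rw [krylov_add_one, ← Set.Iio_insert, Set.image_insert_eq, span_insert, krylov]

theorem self_mem_krylov_succ (j : ℕ) : r ∈ krylov T r (j + 1) :=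
  subset_span ⟨0, Nat.succ_pos j, by simp⟩

theorem map_krylov_le_krylov_succ (j : ℕ) :
    (krylov T r j).map (T : E →ₗ[𝕜] E) ≤ krylov T r (j + 1) := by
  rw [krylov, map_span, span_le]
  rintro _ ⟨_, ⟨i, hi, rfl⟩, rfl⟩
  exact subset_span ⟨i + 1, Nat.succ_lt_succ hi, by simp [pow_succ']⟩

theorem finrank_krylov_succ_le (j : ℕ) :
    finrank 𝕜 (krylov T r (j + 1)) ≤ finrank 𝕜 (krylov T r j) + 1 := by
  rw [krylov_succ, add_comm]
  exact (finrank_add_le_finrank_add_finrank _ _).trans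
    (Nat.add_le_add_right ((finrank_span_le_card {(T ^ j) r}).trans (by simp)) _)

theorem mem_krylov_iff {j : ℕ} {y : E} :
    y ∈ krylov T r j ↔ ∃ q ∈ degreeLT 𝕜 j, aeval T q r = y := by
  classical
  let φ : 𝕜[X] →ₗ[𝕜] E :=
    (ContinuousLinearMap.apply 𝕜 E r : (E →L[𝕜] E) →ₗ[𝕜] E) ∘ₗ (aeval T).toLinearMap
  have : krylov T r j = (degreeLT 𝕜 j).map φ := by
    rw [degreeLT_eq_span_X_pow, map_span, krylov]
    congr 1
    ext x
    simp [φ]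
  rw [this]
  rfl

end Krylov

section Geometry

variable {𝕜 E : Type*} [RCLike 𝕜] [NormedAddCommGroup E] [InnerProductSpace 𝕜 E]

theorem Orthonormal.mem_orthogonal_span_image {ι : Type*} {v : ι → E} (hv : Orthonormal 𝕜 v)
    {s : Set ι} {i : ι} (hi : i ∉ s) : v i ∈ (span 𝕜 (v '' s))ᗮ := by
  have : span 𝕜 (v '' s) ≤ (𝕜 ∙ v i)ᗮ := by
    rw [span_le]
    rintro _ ⟨j, hj, rfl⟩
    exact mem_orthogonal_singleton_iff_inner_left.2
      (hv.inner_eq_zero (ne_of_mem_of_not_mem hj hi))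
  exact orthogonal_le this (le_orthogonal_orthogonal _ (mem_span_singleton_self _))

theorem Orthonormal.mem_orthogonal_of_span_image_Iic_eq {n : ℕ} {v : Fin n → E}
    (hv : Orthonormal 𝕜 v) {g : ℕ → Submodule 𝕜 E} (h0 : g 0 = ⊥)
    (h : ∀ j : Fin n, span 𝕜 (v '' Set.Iic j) = g (j + 1)) (j : Fin n) : v j ∈ (g j)ᗮ := by
  rw [← span_image_Iio_eq_of_span_image_Iic_eq h0 h]
  exact hv.mem_orthogonal_span_image (lt_irrefl j)

theorem norm_sub_inner_smul_eq {u t z : E} {a b : 𝕜} (hut : ⟪u, t⟫_𝕜 = 0) (ht : ‖t‖ = 1)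
    (hz : ‖z‖ = 1) (hzut : z = a • t + b • u) :
    ‖u - ⟪z, u⟫_𝕜 • z‖ = ‖⟪z, t⟫_𝕜‖ * ‖u‖ := by
  have htu : ⟪t, u⟫_𝕜 = 0 := inner_eq_zero_symm.1 hut
  have hzu : ⟪z, u⟫_𝕜 = starRingEnd 𝕜 b * (‖u‖ : 𝕜) ^ 2 := by
    simp [hzut, inner_add_left, inner_smul_left, htu, inner_self_eq_norm_sq_to_K]
  have hzt : ⟪z, t⟫_𝕜 = starRingEnd 𝕜 a := by
    simp [hzut, inner_add_left, inner_smul_left, hut, inner_self_eq_norm_sq_to_K, ht]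
  have hpyth : ‖a‖ ^ 2 + ‖b‖ ^ 2 * ‖u‖ ^ 2 = 1 := by
    have := norm_add_sq_eq_norm_sq_add_norm_sq_of_inner_eq_zero (𝕜 := 𝕜) (a • t) (b • u)
      (by simp [inner_smul_left, inner_smul_right, htu])
    rw [← hzut, hz, norm_smul, norm_smul, ht] at this
    linear_combination -this
  have hsq : ‖u - ⟪z, u⟫_𝕜 • z‖ ^ 2 = ‖u‖ ^ 2 - ‖⟪z, u⟫_𝕜‖ ^ 2 := by
    rw [norm_sub_sq (𝕜 := 𝕜), inner_smul_right, ← inner_conj_symm, RCLike.conj_mul, norm_smul,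
      hz]
    simp only [mul_one, ← RCLike.ofReal_pow, RCLike.ofReal_re, RCLike.norm_conj]
    ring
  rw [hzt, RCLike.norm_conj]
  refine (pow_left_inj₀ (norm_nonneg _) (by positivity) two_ne_zero).1 ?_
  rw [hsq, hzu, norm_mul, RCLike.norm_conj, norm_pow, RCLike.norm_ofReal, abs_norm]
  linear_combination -(‖u‖ ^ 2) * hpyth

theorem mem_span_singleton_of_mem_orthogonal_inf {K W : Submodule 𝕜 E}
    [FiniteDimensional 𝕜 K] (hWK : W ≤ K) (hdim : finrank 𝕜 K ≤ finrank 𝕜 W + 1) {u x : E}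
    (hu : u ∈ Wᗮ ⊓ K) (hu0 : u ≠ 0) (hx : x ∈ Wᗮ ⊓ K) : x ∈ 𝕜 ∙ u := by
  have hsum := finrank_add_inf_finrank_orthogonal hWK
  have hspan : 𝕜 ∙ u = Wᗮ ⊓ K :=
    eq_of_le_of_finrank_le ((span_singleton_le_iff_mem _ _).2 hu)
      (by rw [finrank_span_singleton hu0]; omega)
  exact hspan ▸ hx

theorem starProjection_span_singleton_sup {W : Submodule 𝕜 E} {z : E}
    [W.HasOrthogonalProjection] [(𝕜 ∙ z ⊔ W).HasOrthogonalProjection] (hz : ‖z‖ = 1)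
    (hzW : z ∈ Wᗮ) (r : E) :
    (𝕜 ∙ z ⊔ W).starProjection r = ⟪z, r⟫_𝕜 • z + W.starProjection r := by
  refine eq_starProjection_of_mem_orthogonal
    (add_mem (mem_sup_left (smul_mem _ _ (mem_span_singleton_self z)))
      (mem_sup_right (W.starProjection_apply_mem r))) ?_
  have hzP : ⟪z, W.starProjection r⟫_𝕜 = 0 :=
    inner_left_of_mem_orthogonal (W.starProjection_apply_mem r) hzW
  rw [← inf_orthogonal, mem_inf, mem_orthogonal_singleton_iff_inner_right,
    sub_add_eq_sub_sub_swap]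
  refine ⟨?_, sub_mem (W.sub_starProjection_mem_orthogonal r) (smul_mem _ _ hzW)⟩
  rw [inner_sub_right, inner_sub_right, hzP, inner_smul_right, inner_self_eq_norm_sq_to_K, hz]
  simp

theorem norm_sub_starProjection_eq_norm_inner_mul {K W V : Submodule 𝕜 E} {r z t : E}
    [FiniteDimensional 𝕜 K] [W.HasOrthogonalProjection] [V.HasOrthogonalProjection]
    (hV : V = 𝕜 ∙ z ⊔ W) (hWK : W ≤ K) (hdim : finrank 𝕜 K ≤ finrank 𝕜 W + 1) (hr : r ∈ K)
    (hz : ‖z‖ = 1) (hzW : z ∈ Wᗮ) (ht : ‖t‖ = 1) (htK : t ∈ Kᗮ) (hzt : z ∈ 𝕜 ∙ t ⊔ K) :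
    ‖r - V.starProjection r‖ = ‖⟪z, t⟫_𝕜‖ * ‖r - W.starProjection r‖ := by
  subst hV
  set u := r - W.starProjection r with hu_def
  have hu : u ∈ Wᗮ ⊓ K :=
    ⟨W.sub_starProjection_mem_orthogonal r, sub_mem hr (hWK (W.starProjection_apply_mem r))⟩
  have hres : r - (𝕜 ∙ z ⊔ W).starProjection r = u - ⟪z, u⟫_𝕜 • z := by
    rw [starProjection_span_singleton_sup hz hzW, hu_def, inner_sub_right,
      inner_left_of_mem_orthogonal (W.starProjection_apply_mem r) hzW, sub_zero]
    abel
  rw [hres]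
  rcases eq_or_ne u 0 with hu0 | hu0
  · simp [hu0]
  obtain ⟨_, hat, x, hxK, rfl⟩ := mem_sup.1 hzt
  obtain ⟨a, rfl⟩ := mem_span_singleton.1 hat
  have hxW : x ∈ Wᗮ := by
    simpa using sub_mem hzW (smul_mem _ a (orthogonal_le hWK htK))
  obtain ⟨b, rfl⟩ := mem_span_singleton.1
    (mem_span_singleton_of_mem_orthogonal_inf hWK hdim hu hu0 ⟨hxW, hxK⟩)
  exact norm_sub_inner_smul_eq (inner_right_of_mem_orthogonal hu.2 htK) ht hz rfl

end Geometry

section GMRES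

variable {H : Type*} [NormedAddCommGroup H] [InnerProductSpace ℂ H]

theorem gmresRes_eq_sInf_norm_sub (T : H →L[ℂ] H) (r0 : H) (j : ℕ) :
    gmresRes T r0 j = sInf ((fun y => ‖r0 - y‖) '' (krylov T r0 j).map (T : H →ₗ[ℂ] H)) := by
  rw [gmresRes]
  congr 1
  ext x
  simp only [Set.mem_ofPred_eq, ← and_assoc, natDegree_le_and_eval_zero_eq_one_iff,
    Set.mem_image, SetLike.mem_coe, mem_map, mem_krylov_iff]
  constructor
  · rintro ⟨_, ⟨q, hq, rfl⟩, rfl⟩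
    exact ⟨_, ⟨_, ⟨q, hq, rfl⟩, rfl⟩, by simp⟩
  · rintro ⟨_, ⟨_, ⟨q, hq, rfl⟩, rfl⟩, rfl⟩
    exact ⟨_, ⟨q, hq, rfl⟩, by simp⟩

theorem gmresRes_eq_norm_sub_starProjection (T : H →L[ℂ] H) (r0 : H) (j : ℕ) :
    gmresRes T r0 j = ‖r0 - ((krylov T r0 j).map (T : H →ₗ[ℂ] H)).starProjection r0‖ := by
  rw [gmresRes_eq_sInf_norm_sub]
  refine IsLeast.csInf_eq ⟨Set.mem_image_of_mem _ (starProjection_apply_mem _ r0), ?_⟩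
  rintro _ ⟨y, hy, rfl⟩
  rw [starProjection_minimal]
  exact ciInf_le (f := fun x : (krylov T r0 j).map (T : H →ₗ[ℂ] H) => ‖r0 - x‖)
    ⟨0, Set.forall_mem_range.2 fun _ => norm_nonneg _⟩ ⟨y, hy⟩

end GMRES

/-- Lemma 4.1 (Moret's formula): `‖r_k‖ = |⟨z_k, t_{k+1}⟩| ‖r_{k-1}‖`, and for
every `λ ∈ ℂ` also `‖r_k‖ = |⟨(I - λA⁻¹) z_k, t_{k+1}⟩| ‖r_{k-1}‖`, where
`t_1, …, t_{k+1}` (here `t 0, …, t k`) is an orthonormal basis of the ascending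
Krylov spaces `K_j(A, r0)` and `z_1, …, z_k` (here `z 0, …, z (k-1)`) is an
orthonormal basis of the spaces `A·K_j(A, r0)`. -/
theorem moret_formula
    {H : Type*} [NormedAddCommGroup H] [InnerProductSpace ℂ H]
    (A : H ≃L[ℂ] H) (r0 : H) (k : ℕ) (hk : 1 ≤ k)
    (t : Fin (k + 1) → H) (ht : Orthonormal ℂ t)
    (htspan : ∀ j : Fin (k + 1),
      Submodule.span ℂ (t '' {i | i ≤ j}) =
        Submodule.span ℂ ((fun i : ℕ => ((A : H →L[ℂ] H) ^ i) r0) '' {i | i ≤ (j : ℕ)}))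
    (z : Fin k → H) (hz : Orthonormal ℂ z)
    (hzspan : ∀ j : Fin k,
      Submodule.span ℂ (z '' {i | i ≤ j}) =
        Submodule.map ((A : H →L[ℂ] H) : H →ₗ[ℂ] H)
          (Submodule.span ℂ ((fun i : ℕ => ((A : H →L[ℂ] H) ^ i) r0) '' {i | i ≤ (j : ℕ)}))) :
    gmresRes (A : H →L[ℂ] H) r0 k =
      ‖(inner ℂ (z ⟨k - 1, by omega⟩) (t (Fin.last k)) : ℂ)‖ * gmresRes (A : H →L[ℂ] H) r0 (k - 1) ∧
    ∀ lam : ℂ,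
      gmresRes (A : H →L[ℂ] H) r0 k =
        ‖(inner ℂ (z ⟨k - 1, by omega⟩ - lam • (A.symm : H →L[ℂ] H) (z ⟨k - 1, by omega⟩))
            (t (Fin.last k)) : ℂ)‖ * gmresRes (A : H →L[ℂ] H) r0 (k - 1) := by
  set T : H →L[ℂ] H := (A : H →L[ℂ] H)
  set j : Fin k := ⟨k - 1, by omega⟩
  have hk1 : (j : ℕ) + 1 = k := Nat.sub_add_cancel hk
  have ht' (i : Fin (k + 1)) : span ℂ (t '' Set.Iic i) = krylov T r0 (i + 1) :=
    (htspan i).trans (krylov_add_one T r0 i).symm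
  have hz' (i : Fin k) :
      span ℂ (z '' Set.Iic i) = (krylov T r0 (i + 1)).map (T : H →ₗ[ℂ] H) :=
    (hzspan i).trans (congrArg _ (krylov_add_one T r0 i).symm)
  have hW0 : (krylov T r0 0).map (T : H →ₗ[ℂ] H) = ⊥ := by simp
  have hK := eq_span_singleton_sup_of_span_image_Iic_eq (krylov_zero T r0) ht' (Fin.last k)
  have htK := ht.mem_orthogonal_of_span_image_Iic_eq (krylov_zero T r0) ht' (Fin.last k)
  have hV := eq_span_singleton_sup_of_span_image_Iic_eq
    (g := fun i => (krylov T r0 i).map (T : H →ₗ[ℂ] H)) hW0 hz' j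
  have hzW := hz.mem_orthogonal_of_span_image_Iic_eq
    (g := fun i => (krylov T r0 i).map (T : H →ₗ[ℂ] H)) hW0 hz' j
  have hWK := map_krylov_le_krylov_succ T r0 j
  have hdim := finrank_krylov_succ_le T r0 j
  have hr := self_mem_krylov_succ T r0 j
  rw [hk1] at hV hWK hdim hr
  rw [(equivMapOfInjective (T : H →ₗ[ℂ] H) A.injective (krylov T r0 j)).finrank_eq] at hdim
  have hzV : z j ∈ (krylov T r0 k).map (T : H →ₗ[ℂ] H) :=
    hV ▸ mem_sup_left (mem_span_singleton_self _)
  have hzt : z j ∈ ℂ ∙ t (Fin.last k) ⊔ krylov T r0 k :=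
    hK ▸ map_krylov_le_krylov_succ T r0 k hzV
  have hAz : (A.symm : H →L[ℂ] H) (z j) ∈ krylov T r0 k := by
    obtain ⟨y, hy, hAy⟩ := hzV
    simpa [T, ← hAy] using hy
  have key :=
    norm_sub_starProjection_eq_norm_inner_mul hV hWK hdim hr (hz.1 j) hzW (ht.1 _) htK hzt
  rw [← gmresRes_eq_norm_sub_starProjection, ← gmresRes_eq_norm_sub_starProjection] at key
  refine ⟨key, fun lam => ?_⟩
  rw [key, inner_sub_left, inner_smul_left, inner_right_of_mem_orthogonal hAz htK, mul_zero,
    sub_zero]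
end
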